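/- Let 𝒮 be a split system on a finite set X. If 𝒮 4-dices X and |X| ≥ 5, then for every 5-subset Y of X the restriction 𝒮|_Y contains at least four 2-splits. -/

import Mathlib

namespace InjectiveSplitSystems

open Finset

variable {α : Type*} [DecidableEq α]

/-- A split of `X`: an unordered bipartition of `X` into two nonempty disjoint parts,
represented as the two-element set `{A, B}` of its parts. -/
def IsSplit (X : Finset α) (S : Finset (Finset α)) : Prop :=
  ∃ A B : Finset α, S = {A, B} ∧ A ∪ B = X ∧ A ∩ B = ∅ ∧ A ≠ ∅ ∧ B ≠ ∅

/-- `S` is an `r`-split of `X`: a split of `X` whose minimum part size is `r`. -/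
def IsRSplit (X : Finset α) (r : ℕ) (S : Finset (Finset α)) : Prop :=
  IsSplit X S ∧ (∃ A ∈ S, A.card = r) ∧ ∀ A ∈ S, r ≤ A.card

/-- A split system on `X`: a set of splits of `X` containing all trivial splits
`{x} | X \ {x}`, `x ∈ X`. -/
def IsSplitSystem (X : Finset α) (𝒮 : Finset (Finset (Finset α))) : Prop :=
  (∀ S ∈ 𝒮, IsSplit X S) ∧ ∀ x ∈ X, ({{x}, X \ {x}} : Finset (Finset α)) ∈ 𝒮

/-- `phiNe Y Y' S` says `φ_Y(S) ≠ φ_{Y'}(S)`: the part of `S` containing at least two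
elements of the 3-set `Y` differs from the part of `S` containing at least two
elements of the 3-set `Y'`. -/
def phiNe (Y Y' : Finset α) (S : Finset (Finset α)) : Prop :=
  ∃ t ∈ S, ∃ t' ∈ S, t ≠ t' ∧ 2 ≤ (Y ∩ t).card ∧ 2 ≤ (Y' ∩ t').card

/-- A split system on `X` is injective if for all distinct 3-subsets `Y`, `Y'` of `X`
there is a split `S ∈ 𝒮` with `φ_Y(S) ≠ φ_{Y'}(S)`. -/
def IsInjective (X : Finset α) (𝒮 : Finset (Finset (Finset α))) : Prop :=
  ∀ Y Y' : Finset α, Y ⊆ X → Y' ⊆ X → Y.card = 3 → Y'.card = 3 → Y ≠ Y' →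
    ∃ S ∈ 𝒮, phiNe Y Y' S

/-- The restriction `S|_Y` of a split to `Y`, as the set of restricted parts. -/
def restrictSplit (S : Finset (Finset α)) (Y : Finset α) : Finset (Finset α) :=
  S.image (· ∩ Y)

open scoped Classical in
/-- The restriction `𝒮|_Y` of a split system to `Y`: all splits
`(A ∩ Y) | (B ∩ Y)` with `A|B ∈ 𝒮` and both intersections nonempty. -/
noncomputable def restrictSS (𝒮 : Finset (Finset (Finset α))) (Y : Finset α) :
    Finset (Finset (Finset α)) :=
  (𝒮.image fun S => restrictSplit S Y).filter fun T => ∀ t ∈ T, t ≠ ∅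

/-- `𝒮` 4-dices `X`. -/
def FourDices (X : Finset α) (𝒮 : Finset (Finset (Finset α))) : Prop :=
  X.card < 4 ∨ ∀ Y ⊆ X, Y.card = 4 →
    ∃ 𝒯 ⊆ restrictSS 𝒮 Y, 2 ≤ 𝒯.card ∧ ∀ S ∈ 𝒯, IsRSplit Y 2 S

/-- `𝒮` 5-dices `X`. -/
def FiveDices (X : Finset α) (𝒮 : Finset (Finset (Finset α))) : Prop :=
  X.card < 5 ∨ ∀ Y ⊆ X, Y.card = 5 →
    ∃ 𝒯 ⊆ restrictSS 𝒮 Y, 5 ≤ 𝒯.card ∧ ∀ S ∈ 𝒯, IsRSplit Y 2 S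

/-- `𝒮` 6-dices `X`: every 6-subset restriction contains a 3-split or a triangle
of 2-splits. -/
def SixDices (X : Finset α) (𝒮 : Finset (Finset (Finset α))) : Prop :=
  X.card < 6 ∨ ∀ Y ⊆ X, Y.card = 6 →
    (∃ S ∈ restrictSS 𝒮 Y, IsRSplit Y 3 S) ∨
    (∃ x ∈ Y, ∃ y ∈ Y, ∃ z ∈ Y, x ≠ y ∧ x ≠ z ∧ y ≠ z ∧
      ({{x, y}, Y \ {x, y}} : Finset (Finset α)) ∈ restrictSS 𝒮 Y ∧
      ({{x, z}, Y \ {x, z}} : Finset (Finset α)) ∈ restrictSS 𝒮 Y ∧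
      ({{y, z}, Y \ {y, z}} : Finset (Finset α)) ∈ restrictSS 𝒮 Y)

/-- Two splits are incompatible if they are distinct and all four pairwise
intersections of their parts are nonempty. -/
def Incompatible (S T : Finset (Finset α)) : Prop :=
  S ≠ T ∧ ∀ A ∈ S, ∀ B ∈ T, A ∩ B ≠ ∅

open scoped Classical in
/-- The dimension of a split system: maximum size of a pairwise incompatible subset
(which is `1` when all splits are pairwise compatible and `𝒮` is nonempty). -/
noncomputable def dimSS (𝒮 : Finset (Finset (Finset α))) : ℕ :=
  (𝒮.powerset.filter fun 𝒯 => ∀ S ∈ 𝒯, ∀ T ∈ 𝒯, S ≠ T → Incompatible S T).sup Finset.card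

/-- The injective dimension `ID(n)`: minimum dimension of an injective split system
on `{1, …, n}`. -/
noncomputable def ID (n : ℕ) : ℕ :=
  sInf {d : ℕ | ∃ 𝒮 : Finset (Finset (Finset ℕ)),
    IsSplitSystem (Finset.Icc 1 n) 𝒮 ∧ IsInjective (Finset.Icc 1 n) 𝒮 ∧ dimSS 𝒮 = d}

/-- The injective 2-split dimension `ID₂(n)`: minimum dimension of an injective split
system on `{1, …, n}` all of whose non-trivial splits have size 2. -/
noncomputable def ID2 (n : ℕ) : ℕ :=
  sInf {d : ℕ | ∃ 𝒮 : Finset (Finset (Finset ℕ)),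
    IsSplitSystem (Finset.Icc 1 n) 𝒮 ∧ IsInjective (Finset.Icc 1 n) 𝒮 ∧
    (∀ S ∈ 𝒮, IsRSplit (Finset.Icc 1 n) 1 S ∨ IsRSplit (Finset.Icc 1 n) 2 S) ∧
    dimSS 𝒮 = d}

/-- `𝒮` is rooted-injective relative to `r`. -/
def IsRootedInjective (X : Finset α) (r : α) (𝒮 : Finset (Finset (Finset α))) : Prop :=
  ∀ Z Z' : Finset α, Z ⊆ X \ {r} → Z' ⊆ X \ {r} → Z.card = 2 → Z'.card = 2 → Z ≠ Z' →
    ∃ S ∈ 𝒮, phiNe (insert r Z) (insert r Z') S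

/-- The rooted-injective dimension `ID^r(n)`: minimum dimension of a split system on an
`n`-element set that is rooted-injective relative to a given element. -/
noncomputable def IDr (n : ℕ) : ℕ :=
  sInf {d : ℕ | ∃ 𝒮 : Finset (Finset (Finset ℕ)),
    IsSplitSystem (Finset.Icc 1 n) 𝒮 ∧ IsRootedInjective (Finset.Icc 1 n) 1 𝒮 ∧
    dimSS 𝒮 = d}

/-- `𝒮` is circular: there is a labelling `x_1, …, x_n` of `X` such that every split
of `𝒮` has the form `{x_i, …, x_j} | complement`. -/
def IsCircular (X : Finset α) (𝒮 : Finset (Finset (Finset α))) : Prop :=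
  ∃ f : ℕ → α, Set.InjOn f ↑(Finset.Icc 1 X.card) ∧
    (Finset.Icc 1 X.card).image f = X ∧
    ∀ S ∈ 𝒮, ∃ i j : ℕ, 1 ≤ i ∧ i ≤ j ∧ j ≤ X.card ∧
      S = {(Finset.Icc i j).image f, X \ (Finset.Icc i j).image f}

/-- `𝒮` is maximal circular: circular and not properly contained in any circular
split system on `X`. -/
def IsMaximalCircular (X : Finset α) (𝒮 : Finset (Finset (Finset α))) : Prop :=
  IsCircular X 𝒮 ∧ ∀ 𝒮' : Finset (Finset (Finset α)),
    IsSplitSystem X 𝒮' → IsCircular X 𝒮' → 𝒮 ⊆ 𝒮' → 𝒮' = 𝒮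

/-- The degree of `x` in the graph `P(𝒮)` on vertex set `X` whose edges are the
pairs `{x, y}` with `xy | X − {x,y} ∈ 𝒮`. -/
def degP (X : Finset α) (𝒮 : Finset (Finset (Finset α))) (x : α) : ℕ :=
  ((X \ {x}).filter fun y => ({{x, y}, X \ {x, y}} : Finset (Finset α)) ∈ 𝒮).card

/-- `P(𝒮)` contains a 3-clique. -/
def HasTriangle (X : Finset α) (𝒮 : Finset (Finset (Finset α))) : Prop :=
  ∃ x ∈ X, ∃ y ∈ X, ∃ z ∈ X, x ≠ y ∧ x ≠ z ∧ y ≠ z ∧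
    ({{x, y}, X \ {x, y}} : Finset (Finset α)) ∈ 𝒮 ∧
    ({{x, z}, X \ {x, z}} : Finset (Finset α)) ∈ 𝒮 ∧
    ({{y, z}, X \ {y, z}} : Finset (Finset α)) ∈ 𝒮

/-- Conditions (B1) and (B2) for a map to be a vertex of the Buneman graph. -/
def IsBunemanVertex (𝒮 : Finset (Finset (Finset α))) (φ : {S // S ∈ 𝒮} → Finset α) : Prop :=
  (∀ S, φ S ∈ S.1) ∧ ∀ S S', S ≠ S' → (φ S ∩ φ S').Nonempty

/-- The vertex set of the Buneman graph `B(𝒮)`. -/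
abbrev BunemanVertex (𝒮 : Finset (Finset (Finset α))) : Type _ :=
  {φ : {S // S ∈ 𝒮} → Finset α // IsBunemanVertex 𝒮 φ}

/-- The Buneman graph `B(𝒮)`: two vertices are adjacent iff they differ on exactly
one split. -/
def BunemanGraph (𝒮 : Finset (Finset (Finset α))) : SimpleGraph (BunemanVertex 𝒮) where
  Adj φ ψ := ∃! S, φ.1 S ≠ ψ.1 S
  symm := by
    constructor
    rintro φ ψ ⟨S, hS, hU⟩
    exact ⟨S, hS.symm, fun T hT => hU T hT.symm⟩
  loopless := by
    constructor
    rintro φ ⟨S, hS, -⟩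
    exact hS rfl

/-- `m` is a median of `u`, `v`, `w` in the graph `G`. -/
def IsMedian {V : Type*} (G : SimpleGraph V) (u v w m : V) : Prop :=
  G.dist u m + G.dist m v = G.dist u v ∧
  G.dist v m + G.dist m w = G.dist v w ∧
  G.dist u m + G.dist m w = G.dist u w

/-!
Double counting. For each point `y` of the 5-set `Y`, the 4-set `Y - y` carries two distinct
2-splits. Both parts of such a split have two points, so it lifts to a 2-split of `Y` whose
2-element part misses `y`, and distinct restrictions have distinct lifts. This gives at least
`5 * 2` incidences between points `y` and 2-splits of `Y` whose 2-element part misses `y`, while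
each 2-split of `Y` has only three points outside its 2-element part; so `3 * n ≥ 10` for the
number `n` of 2-splits of `Y`.
-/

lemma restrictSplit_pair (A B Y : Finset α) : restrictSplit {A, B} Y = {A ∩ Y, B ∩ Y} := by
  simp [restrictSplit]

lemma restrictSplit_restrictSplit (S : Finset (Finset α)) {Y Z : Finset α} (hZY : Z ⊆ Y) :
    restrictSplit (restrictSplit S Y) Z = restrictSplit S Z := by
  simp [restrictSplit, image_image, Function.comp_def, inter_assoc, inter_eq_right.mpr hZY]

lemma card_inter_add_card_inter {A B X Y : Finset α} (hAB : A ∪ B = X) (hdisj : Disjoint A B)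
    (hYX : Y ⊆ X) : #(A ∩ Y) + #(B ∩ Y) = #Y := by
  rw [← card_union_of_disjoint (hdisj.mono inter_subset_left inter_subset_left),
    ← union_inter_distrib_right, hAB, inter_eq_right.mpr hYX]

lemma isRSplit_pair {A B Y : Finset α} {r : ℕ} (hr : 0 < r) (hAB : A ∪ B = Y)
    (hdisj : Disjoint A B) (hA : r ≤ #A) (hB : r ≤ #B) (hmin : #A = r ∨ #B = r) :
    IsRSplit Y r {A, B} := by
  refine ⟨⟨A, B, rfl, hAB, disjoint_iff_inter_eq_empty.mp hdisj, ?_, ?_⟩, ?_, ?_⟩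
  · exact nonempty_iff_ne_empty.mp (card_pos.mp (hr.trans_le hA))
  · exact nonempty_iff_ne_empty.mp (card_pos.mp (hr.trans_le hB))
  · rcases hmin with h | h
    · exact ⟨A, by simp, h⟩
    · exact ⟨B, by simp, h⟩
  · simpa using ⟨hA, hB⟩

lemma restrictSplit_mem_restrictSS {𝒮 : Finset (Finset (Finset α))} {S : Finset (Finset α)}
    {Y : Finset α} {r : ℕ} (hS : S ∈ 𝒮) (hr : 0 < r) (h : IsRSplit Y r (restrictSplit S Y)) :
    restrictSplit S Y ∈ restrictSS 𝒮 Y := by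
  refine mem_filter.mpr ⟨mem_image_of_mem _ hS, fun t ht => ?_⟩
  exact nonempty_iff_ne_empty.mp (card_pos.mp (hr.trans_le (h.2.2 t ht)))

def PairPartAvoids (U : Finset (Finset α)) (y : α) : Prop :=
  ∃ t ∈ U, #t = 2 ∧ y ∉ t

lemma isRSplit_two_restrictSplit_of_erase {X Y : Finset α} {S : Finset (Finset α)} {y : α}
    (hS : IsSplit X S) (hYX : Y ⊆ X) (hY : #Y = 5) (hy : y ∈ Y)
    (h : IsRSplit (Y.erase y) 2 (restrictSplit S (Y.erase y))) :
    IsRSplit Y 2 (restrictSplit S Y) ∧ PairPartAvoids (restrictSplit S Y) y := by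
  obtain ⟨A, B, rfl, hAB, hdisj, -, -⟩ := hS
  rw [← disjoint_iff_inter_eq_empty] at hdisj
  rw [restrictSplit_pair] at h ⊢
  wlog hyB : y ∈ B generalizing A B
  · have hyA : y ∈ A := (mem_union.mp (hAB ▸ hYX hy : y ∈ A ∪ B)).resolve_right hyB
    rw [pair_comm] at h ⊢
    exact this B A h (by rw [union_comm, hAB]) hdisj.symm hyA
  have hZX : Y.erase y ⊆ X := (erase_subset y Y).trans hYX
  have hZ := card_inter_add_card_inter hAB hdisj hZX
  have hAZ : 2 ≤ #(A ∩ Y.erase y) := h.2.2 _ (by simp)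
  have hBZ : 2 ≤ #(B ∩ Y.erase y) := h.2.2 _ (by simp)
  rw [card_erase_of_mem hy, hY] at hZ
  have hAY : A ∩ Y = A ∩ Y.erase y := by
    ext x
    by_cases hx : x = y
    · subst hx; simp [disjoint_right.mp hdisj hyB]
    · simp [hx]
  have hA2 : #(A ∩ Y) = 2 := by rw [hAY]; omega
  have hB3 : #(B ∩ Y) = 3 := by
    have := card_inter_add_card_inter hAB hdisj hYX
    omega
  refine ⟨isRSplit_pair two_pos (by rw [← union_inter_distrib_right, hAB,
    inter_eq_right.mpr hYX]) (hdisj.mono inter_subset_left inter_subset_left)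
    (by omega) (by omega) (by omega), A ∩ Y, by simp, by omega, ?_⟩
  exact fun hyA => disjoint_right.mp hdisj hyB (mem_of_mem_inter_left hyA)

lemma card_filter_pairPartAvoids_le {Y : Finset α} {U : Finset (Finset α)}
    [DecidablePred (PairPartAvoids U)] (hY : #Y = 5) (hU : IsRSplit Y 2 U) :
    #(Y.filter (PairPartAvoids U)) ≤ 3 := by
  obtain ⟨⟨A, B, rfl, hAB, hdisj, -, -⟩, ⟨P, hP, hP2⟩, -⟩ := hU
  have hsum : #A + #B = 5 := by
    rw [← card_union_of_disjoint (disjoint_iff_inter_eq_empty.mpr hdisj), hAB, hY]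
  have hPY : P ⊆ Y := by
    rcases mem_insert.mp hP with rfl | hP
    · exact hAB ▸ subset_union_left
    · exact (mem_singleton.mp hP) ▸ hAB ▸ subset_union_right
  have hsub : Y.filter (PairPartAvoids {A, B}) ⊆ Y \ P := by
    intro y hy
    obtain ⟨hyY, t, ht, ht2, hyt⟩ := mem_filter.mp hy
    refine mem_sdiff.mpr ⟨hyY, ?_⟩
    obtain rfl : t = P := by
      simp only [mem_insert, mem_singleton] at hP ht
      rcases hP with rfl | rfl <;> rcases ht with rfl | rfl <;> first | rfl | omega
    exact hyt
  calc #(Y.filter _) ≤ #(Y \ P) := card_le_card hsub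
    _ = 3 := by rw [card_sdiff_of_subset hPY, hY, hP2]

open scoped Classical in
noncomputable def twoSplits (𝒮 : Finset (Finset (Finset α))) (Y : Finset α) :
    Finset (Finset (Finset α)) :=
  (restrictSS 𝒮 Y).filter (IsRSplit Y 2)

lemma mem_twoSplits {𝒮 : Finset (Finset (Finset α))} {Y : Finset α} {U : Finset (Finset α)} :
    U ∈ twoSplits 𝒮 Y ↔ U ∈ restrictSS 𝒮 Y ∧ IsRSplit Y 2 U := by
  classical
  simp [twoSplits]

lemma exists_lift_of_mem_restrictSS_erase {X Y : Finset α} {𝒮 : Finset (Finset (Finset α))}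
    {y : α} (h𝒮 : ∀ S ∈ 𝒮, IsSplit X S) (hYX : Y ⊆ X) (hY : #Y = 5) (hy : y ∈ Y)
    {S' : Finset (Finset α)} (hS' : S' ∈ restrictSS 𝒮 (Y.erase y))
    (h2 : IsRSplit (Y.erase y) 2 S') :
    ∃ U ∈ twoSplits 𝒮 Y, PairPartAvoids U y ∧ restrictSplit U (Y.erase y) = S' := by
  obtain ⟨S, hS, rfl⟩ := mem_image.mp (mem_filter.mp hS').1
  obtain ⟨hU2, hUy⟩ := isRSplit_two_restrictSplit_of_erase (h𝒮 S hS) hYX hY hy h2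
  exact ⟨_, mem_twoSplits.mpr ⟨restrictSplit_mem_restrictSS hS two_pos hU2, hU2⟩, hUy,
    restrictSplit_restrictSplit S (erase_subset y Y)⟩

open scoped Classical in
lemma two_le_card_twoSplits_filter_pairPartAvoids {X Y : Finset α}
    {𝒮 : Finset (Finset (Finset α))} {y : α} (h𝒮 : ∀ S ∈ 𝒮, IsSplit X S)
    (h4 : FourDices X 𝒮) (hYX : Y ⊆ X) (hY : #Y = 5) (hy : y ∈ Y) :
    2 ≤ #((twoSplits 𝒮 Y).filter (PairPartAvoids · y)) := by
  have hX : 5 ≤ #X := hY ▸ card_le_card hYX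
  obtain ⟨𝒯, h𝒯, h𝒯2, h𝒯split⟩ := (h4.resolve_left (by omega)) (Y.erase y)
    ((erase_subset y Y).trans hYX) (by rw [card_erase_of_mem hy, hY])
  have hlift : 𝒯 ⊆ ((twoSplits 𝒮 Y).filter (PairPartAvoids · y)).image
      (restrictSplit · (Y.erase y)) := by
    intro S' hS'
    obtain ⟨U, hU, hUy, rfl⟩ :=
      exists_lift_of_mem_restrictSS_erase h𝒮 hYX hY hy (h𝒯 hS') (h𝒯split S' hS')
    exact mem_image_of_mem _ (mem_filter.mpr ⟨hU, hUy⟩)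
  exact h𝒯2.trans ((card_le_card hlift).trans card_image_le)

theorem statement8_general (X : Finset α) (𝒮 : Finset (Finset (Finset α)))
    (h𝒮 : IsSplitSystem X 𝒮) (h4 : FourDices X 𝒮) :
    ∀ Y ⊆ X, Y.card = 5 →
      ∃ 𝒯 ⊆ restrictSS 𝒮 Y, 4 ≤ 𝒯.card ∧ ∀ S ∈ 𝒯, IsRSplit Y 2 S := by
  classical
  intro Y hYX hY5
  refine ⟨twoSplits 𝒮 Y, fun S hS => (mem_twoSplits.mp hS).1, ?_,
    fun S hS => (mem_twoSplits.mp hS).2⟩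
  have hcount : #Y * 2 ≤ #(twoSplits 𝒮 Y) * 3 :=
    card_mul_le_card_mul (fun y U => PairPartAvoids U y)
      (fun y hy => two_le_card_twoSplits_filter_pairPartAvoids h𝒮.1 h4 hYX hY5 hy)
      (fun U hU => card_filter_pairPartAvoids_le hY5 (mem_twoSplits.mp hU).2)
  omega

/-- If `𝒮` 4-dices `X` and `|X| ≥ 5`, then for every 5-subset `Y` of
`X` the restriction `𝒮|_Y` contains at least four 2-splits. -/
theorem statement8 (X : Finset α) (𝒮 : Finset (Finset (Finset α)))
    (h𝒮 : IsSplitSystem X 𝒮) (h4 : FourDices X 𝒮) (hX : 5 ≤ X.card) :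
    ∀ Y ⊆ X, Y.card = 5 →
      ∃ 𝒯 ⊆ restrictSS 𝒮 Y, 4 ≤ 𝒯.card ∧ ∀ S ∈ 𝒯, IsRSplit Y 2 S :=
  statement8_general X 𝒮 h𝒮 h4

end InjectiveSplitSystems
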